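/- arXiv:2006.11630 — 2 statements merged into one kernel-verified Lean document; each statement's English description precedes it below -/
import Mathlib

section
/- Suppose z^{k+1} = T(z^k) + ε^k where T is δ-Lipschitz with 0 ≤ δ < 1 and ‖ε^k‖ → 0 as k → ∞. Then ‖z^{k+1} - z^k‖ → 0 as k → ∞. -/
open Filter

lemma aux_tendsto_zero (a b : ℕ → ℝ) (δ : ℝ) (hδ0 : 0 ≤ δ) (hδ1 : δ < 1)
    (ha : ∀ n, 0 ≤ a n) (hrec : ∀ n, a (n + 1) ≤ δ * a n + b n)
    (hb : Tendsto b atTop (nhds 0)) : Tendsto a atTop (nhds 0) := by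
  rw [Metric.tendsto_atTop]
  intro ε hε
  have hδ' : 0 < 1 - δ := by linarith
  have hε2 : 0 < (1 - δ) * ε / 2 := by positivity
  obtain ⟨N, hN⟩ := (Metric.tendsto_atTop.1 hb) _ hε2
  have key : ∀ m, a (N + m) ≤ δ ^ m * a N + ε / 2 := by
    intro m
    induction m with
    | zero => simp; nlinarith [ha N]
    | succ m ih =>
      have h1 := hrec (N + m)
      have h2 := hN (N + m) (Nat.le_add_right _ _)
      rw [Real.dist_eq, sub_zero] at h2
      have h3 : b (N + m) ≤ (1 - δ) * ε / 2 := (abs_le.1 h2.le).2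
      have : a (N + m + 1) ≤ δ * (δ ^ m * a N + ε / 2) + (1 - δ) * ε / 2 := by
        calc a (N + m + 1) ≤ δ * a (N + m) + b (N + m) := h1
          _ ≤ δ * (δ ^ m * a N + ε / 2) + (1 - δ) * ε / 2 := by
              gcongr
      have heq : N + (m + 1) = N + m + 1 := by ring
      rw [heq]
      calc a (N + m + 1) ≤ δ * (δ ^ m * a N + ε / 2) + (1 - δ) * ε / 2 := this
        _ = δ ^ (m + 1) * a N + ε / 2 := by ring
  obtain ⟨M, hM⟩ := (Metric.tendsto_atTop.1
    (tendsto_pow_atTop_nhds_zero_of_lt_one hδ0 hδ1)) (ε / 2 / (a N + 1))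
    (div_pos (by linarith) (by linarith [ha N]))
  refine ⟨N + M, fun n hn => ?_⟩
  obtain ⟨m, rfl⟩ := Nat.exists_eq_add_of_le (le_trans (Nat.le_add_right N M) hn)
  rw [Real.dist_eq, sub_zero, abs_of_nonneg (ha _)]
  have hm : M ≤ m := by omega
  have hpow : δ ^ m ≤ δ ^ M := pow_le_pow_of_le_one hδ0 hδ1.le hm
  have hM' := hM M le_rfl
  rw [Real.dist_eq, sub_zero, abs_of_nonneg (pow_nonneg hδ0 M)] at hM'
  have h1 : δ ^ m * a N ≤ δ ^ M * a N := by gcongr; exact ha N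
  have hA : 0 < a N + 1 := by linarith [ha N]
  have h2 : δ ^ M * a N < ε / 2 := by
    calc δ ^ M * a N ≤ δ ^ M * (a N + 1) := by nlinarith [pow_nonneg hδ0 M]
      _ < ε / 2 / (a N + 1) * (a N + 1) := by exact mul_lt_mul_of_pos_right hM' hA
      _ = ε / 2 := div_mul_cancel₀ _ hA.ne'
  linarith [key m]

theorem perturbed_fixed_point_convergence (d : ℕ)
    (T : EuclideanSpace ℝ (Fin d) → EuclideanSpace ℝ (Fin d))
    (z ε : ℕ → EuclideanSpace ℝ (Fin d)) (δ : ℝ)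
    (hδ0 : 0 ≤ δ) (hδ1 : δ < 1)
    (hT : ∀ x y, ‖T x - T y‖ ≤ δ * ‖x - y‖)
    (hrec : ∀ k, z (k + 1) = T (z k) + ε k)
    (herr : Tendsto (fun k => ‖ε k‖) atTop (nhds 0)) :
    Tendsto (fun k => ‖z (k + 1) - z k‖) atTop (nhds 0) := by
  apply aux_tendsto_zero _ (fun k => ‖ε (k + 1)‖ + ‖ε k‖) δ hδ0 hδ1
  · intro n; exact norm_nonneg _
  · intro k
    have : z (k + 2) - z (k + 1) = (T (z (k + 1)) - T (z k)) + (ε (k + 1) - ε k) := by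
      rw [hrec (k + 1), hrec k]; abel
    calc ‖z (k + 1 + 1) - z (k + 1)‖
        = ‖(T (z (k + 1)) - T (z k)) + (ε (k + 1) - ε k)‖ := by rw [this]
      _ ≤ ‖T (z (k + 1)) - T (z k)‖ + ‖ε (k + 1) - ε k‖ := norm_add_le _ _
      _ ≤ δ * ‖z (k + 1) - z k‖ + (‖ε (k + 1)‖ + ‖ε k‖) := by
          gcongr
          · exact hT _ _
          · exact norm_sub_le _ _
  · have h1 : Tendsto (fun k => ‖ε (k + 1)‖) atTop (nhds 0) :=
      herr.comp (tendsto_add_atTop_nat 1)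
    simpa using h1.add herr
end

section
/- Let δ ∈ [0,1), C > 0, and let (a_k) be nonnegative reals with a_{k+1} ≤ δ^k·a_1 + (C/k)·Σ_{i=0}^{k-1} k·δ^i/(k-i) for all k ≥ 1. Then a_k → 0 as k → ∞. -/
/-!
The sum `∑_{i<k} δ^i / (k - i)` is the convolution of the summable sequence `δ^i` with the null
sequence `1/j`, so it tends to zero by Tannery's theorem (dominated convergence for series, with
dominating sequence `δ^i · sup_j 1/j`). Hence the bound on `a (k + 1)` tends to zero and the
squeeze theorem applies.
-/

open Filter Topology Finset

theorem tendsto_sum_range_mul_sub_of_summable_norm {R : Type*} [NormedRing R] [CompleteSpace R]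
    {f g : ℕ → R} (hf : Summable (‖f ·‖)) (hg : Tendsto g atTop (𝓝 0)) :
    Tendsto (fun k ↦ ∑ i ∈ range k, f i * g (k - i)) atTop (𝓝 0) := by
  obtain ⟨M, hM⟩ := (Metric.isBounded_range_of_tendsto g hg).exists_norm_le
  set F : ℕ → ℕ → R := fun k i ↦ if i < k then f i * g (k - i) else 0
  have hF_sum (k : ℕ) : ∑' i, F k i = ∑ i ∈ range k, f i * g (k - i) := by
    rw [tsum_eq_sum (s := range k) fun i hi ↦ by simp_all [F]]
    exact sum_congr rfl fun i hi ↦ if_pos (mem_range.mp hi)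
  have hF_lim (i : ℕ) : Tendsto (F · i) atTop (𝓝 0) := by
    have hshift : Tendsto (fun k ↦ f i * g (k - i)) atTop (𝓝 0) := by
      simpa using (hg.comp (tendsto_sub_atTop_nat i)).const_mul (f i)
    refine hshift.congr' ?_
    filter_upwards [eventually_gt_atTop i] with k hk
    simp [F, hk]
  have hF_le (k i : ℕ) : ‖F k i‖ ≤ ‖f i‖ * M := by
    by_cases hik : i < k
    · simp only [F, if_pos hik]
      exact (norm_mul_le _ _).trans
        (mul_le_mul_of_nonneg_left (hM _ (Set.mem_range_self _)) (norm_nonneg _))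
    · simp only [F, if_neg hik, norm_zero]
      exact mul_nonneg (norm_nonneg _) ((norm_nonneg _).trans (hM _ (Set.mem_range_self 0)))
  simpa [hF_sum] using
    tendsto_tsum_of_dominated_convergence (hf.mul_right M) hF_lim (Eventually.of_forall hF_le)

theorem div_mul_sum_range_mul_div_sub (C : ℝ) (x : ℕ → ℝ) (k : ℕ) :
    C / k * ∑ i ∈ range k, k * x i / ((k : ℝ) - i) =
      C * ∑ i ∈ range k, x i * ((k - i : ℕ) : ℝ)⁻¹ := by
  rcases Nat.eq_zero_or_pos k with rfl | hk
  · simp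
  rw [mul_sum, mul_sum]
  refine sum_congr rfl fun i hi ↦ ?_
  rw [Nat.cast_sub (mem_range.mp hi).le]
  field_simp

theorem sequence_bound_tendsto_zero_general (a : ℕ → ℝ) (δ C : ℝ)
    (hδ0 : 0 ≤ δ) (hδ1 : δ < 1)
    (ha : ∀ k, 0 ≤ a k)
    (hbound : ∀ k : ℕ, 1 ≤ k →
      a (k + 1) ≤ δ ^ k * a 1 + (C / k) * ∑ i ∈ Finset.range k, (k * δ ^ i) / ((k : ℝ) - i)) :
    Tendsto a atTop (nhds 0) := by
  have hconv : Tendsto (fun k : ℕ ↦ ∑ i ∈ range k, δ ^ i * ((k - i : ℕ) : ℝ)⁻¹) atTop (𝓝 0) :=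
    tendsto_sum_range_mul_sub_of_summable_norm (f := (δ ^ ·)) (g := fun n : ℕ ↦ (n : ℝ)⁻¹)
      (by simpa only [norm_pow, Real.norm_of_nonneg hδ0] using summable_geometric_of_lt_one hδ0 hδ1)
      tendsto_inv_atTop_nhds_zero_nat
  have hupper : Tendsto (fun k : ℕ ↦ δ ^ k * a 1 + C * ∑ i ∈ range k, δ ^ i * ((k - i : ℕ) : ℝ)⁻¹)
      atTop (𝓝 0) := by
    simpa using ((tendsto_pow_atTop_nhds_zero_of_lt_one hδ0 hδ1).mul_const (a 1)).add
      (hconv.const_mul C)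
  have hshift : Tendsto (fun k ↦ a (k + 1)) atTop (𝓝 0) := by
    refine squeeze_zero' (Eventually.of_forall fun k ↦ ha _) ?_ hupper
    filter_upwards [eventually_ge_atTop 1] with k hk
    simpa only [div_mul_sum_range_mul_div_sub] using hbound k hk
  exact (tendsto_add_atTop_iff_nat 1).mp hshift

theorem sequence_bound_tendsto_zero (a : ℕ → ℝ) (δ C : ℝ)
    (hδ0 : 0 ≤ δ) (hδ1 : δ < 1) (hC : 0 < C)
    (ha : ∀ k, 0 ≤ a k)
    (hbound : ∀ k : ℕ, 1 ≤ k →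
      a (k + 1) ≤ δ ^ k * a 1 + (C / k) * ∑ i ∈ Finset.range k, (k * δ ^ i) / ((k : ℝ) - i)) :
    Tendsto a atTop (nhds 0) :=
  sequence_bound_tendsto_zero_general a δ C hδ0 hδ1 ha hbound
end
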